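/- Let A be the atomic Presburger formula f(x,y) ⋈ g(x,y), where f and g are linear polynomials with ℕ coefficients and ⋈ ∈ {<, ≤, =, >, ≥}, and let TA_A be its gadget sketch. For all assignments X : {x₁,…,xₙ} → ℕ and Y : {y₁,…,y_m} → ℕ, the following are equivalent: (1) f(X,Y) ⋈ g(X,Y) holds; (2) there exists a simple configuration C of TA_A[X] with C(start_A) > 0 and C(t_i) = Y(y_i) for all 1 ≤ i ≤ m, from which end_A can be covered. -/

import Mathlib

namespace ThresholdAutomata

/-- A comparison operator `⋈ ∈ {<, ≤, =, >, ≥}`. -/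
inductive CmpOp : Type
  | lt | le | eq | gt | ge

/-- Interpretation of a comparison operator on `ℕ`. -/
def CmpOp.holds : CmpOp → ℕ → ℕ → Prop
  | .lt, a, b => a < b
  | .le, a, b => a ≤ b
  | .eq, a, b => a = b
  | .gt, a, b => a > b
  | .ge, a, b => a ≥ b

/-- A linear polynomial with `ℕ` coefficients over the variables
`x₁, …, xₙ, y₁, …, y_m`. -/
structure LinPoly (n m : ℕ) where
  xcoeff : Fin n → ℕ
  ycoeff : Fin m → ℕ
  const : ℕ

/-- The value of a linear polynomial at assignments `X` to the `x`-variables and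
`Y` to the `y`-variables. -/
def LinPoly.eval {n m : ℕ} (f : LinPoly n m) (X : Fin n → ℕ) (Y : Fin m → ℕ) : ℕ :=
  ∑ i, f.xcoeff i * X i + ∑ j, f.ycoeff j * Y j + f.const

/-- A configuration of the gadget sketch `TA_A` for the atomic Presburger formula
`A = (f(x,y) ⋈ g(x,y))` (after substituting values for the indeterminates).
Locations are `0 = start_A`, `1 = ℓ_A`, `2 = end_A`; `v` is the single shared
variable `v_A`; the environment variables are `t₁, …, t_m` and `z`,
where `z` is the total number of processes (the number function is `N = z`). -/
structure Config (m : ℕ) where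
  κ : Fin 3 → ℕ
  v : ℕ
  t : Fin m → ℕ
  z : ℕ

/-- Moving one process from location `p` to location `q`. -/
def move {α : Type*} [DecidableEq α] (κ : α → ℕ) (p q : α) : α → ℕ :=
  Function.update (Function.update κ p (κ p - 1)) q (κ q + 1)

/-- The step relation of `TA_A[X]` for the atom `A = (f(x,y) ⋈ g(x,y))`:
two unguarded rules from `start_A` to `ℓ_A` (one incrementing `v_A`, one
incrementing nothing), and one non-incrementing rule from `ℓ_A` to `end_A`
with guard `v_A = f(s,t) ∧ v_A ⋈ g(s,t)` (where the indeterminates `s` have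
the values `X` and `t` are the environment variables). -/
inductive Step {n m : ℕ} (f g : LinPoly n m) (op : CmpOp) (X : Fin n → ℕ) :
    Config m → Config m → Prop
  | inc (C : Config m) (h : 0 < C.κ 0) :
      Step f g op X C ⟨move C.κ 0 1, C.v + 1, C.t, C.z⟩
  | skip (C : Config m) (h : 0 < C.κ 0) :
      Step f g op X C ⟨move C.κ 0 1, C.v, C.t, C.z⟩
  | fin (C : Config m) (h : 0 < C.κ 1)
      (hg₁ : C.v = f.eval X C.t) (hg₂ : op.holds C.v (g.eval X C.t)) :
      Step f g op X C ⟨move C.κ 1 2, C.v, C.t, C.z⟩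

/-- `C` is a configuration: the total number of processes is `z`. -/
def Config.valid {m : ℕ} (C : Config m) : Prop :=
  C.κ 0 + C.κ 1 + C.κ 2 = C.z

/-- A simple configuration: all processes are in exactly one location
and the shared variable has value `0`. -/
def Simple {m : ℕ} (C : Config m) : Prop :=
  C.valid ∧ C.v = 0 ∧
  ∃ ℓ : Fin 3, 0 < C.κ ℓ ∧ ∀ ℓ' : Fin 3, ℓ' ≠ ℓ → C.κ ℓ' = 0

/-- `C` can cover `end_A` in `TA_A[X]`. -/
def CoversEnd {n m : ℕ} (f g : LinPoly n m) (op : CmpOp) (X : Fin n → ℕ)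
    (C : Config m) : Prop :=
  ∃ C' : Config m, Relation.ReflTransGen (Step f g op X) C C' ∧ 0 < C'.κ 2

private lemma step_t {n m : ℕ} {f g : LinPoly n m} {op : CmpOp} {X : Fin n → ℕ}
    {C C' : Config m} (h : Step f g op X C C') : C'.t = C.t := by
  cases h <;> rfl

private lemma rtg_t {n m : ℕ} {f g : LinPoly n m} {op : CmpOp} {X : Fin n → ℕ}
    {C C' : Config m} (h : Relation.ReflTransGen (Step f g op X) C C') : C'.t = C.t := by
  induction h with
  | refl => rfl
  | tail _ hs ih => rw [step_t hs, ih]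

private lemma covers_guard {n m : ℕ} {f g : LinPoly n m} {op : CmpOp} {X : Fin n → ℕ}
    {C C' : Config m} (h : Relation.ReflTransGen (Step f g op X) C C')
    (h2 : 0 < C'.κ 2) :
    0 < C.κ 2 ∨ op.holds (f.eval X C.t) (g.eval X C.t) := by
  induction h with
  | refl => exact Or.inl h2
  | @tail b c hbc hs ih =>
    cases hs with
    | inc h0 =>
      apply ih
      simpa [move, Function.update] using h2
    | skip h0 =>
      apply ih
      simpa [move, Function.update] using h2
    | fin h1 hg₁ hg₂ =>
      right
      have ht : b.t = C.t := rtg_t hbc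
      rw [← ht, ← hg₁]
      exact hg₂

/-- **Lemma 1, atomic-formula case**: for the atom `A = (f(x,y) ⋈ g(x,y))` and all
assignments `X`, `Y` over `ℕ`, `A(X,Y)` is true iff there is a simple
configuration `C` of `TA_A[X]` with `C(start_A) > 0` and `C(tᵢ) = Y(yᵢ)` for all
`i` from which `end_A` can be covered. -/
theorem atomic_gadget_correct (n m : ℕ) (f g : LinPoly n m) (op : CmpOp)
    (X : Fin n → ℕ) (Y : Fin m → ℕ) :
    op.holds (f.eval X Y) (g.eval X Y) ↔
      ∃ C : Config m, Simple C ∧ 0 < C.κ 0 ∧ (∀ i, C.t i = Y i) ∧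
        CoversEnd f g op X C := by
  constructor
  · intro hA
    set F := f.eval X Y with hF
    refine ⟨⟨![F + 1, 0, 0], 0, Y, F + 1⟩, ?_, ?_, ?_, ?_⟩
    · refine ⟨?_, rfl, ⟨0, ?_, ?_⟩⟩
      · simp [Config.valid]
      · simp
      · intro ℓ' hℓ'
        fin_cases ℓ' <;> simp_all
    · simp
    · intro i; rfl
    · -- build the run
      have key : ∀ k, k ≤ F →
          Relation.ReflTransGen (Step f g op X)
            ⟨![F + 1, 0, 0], 0, Y, F + 1⟩ ⟨![F + 1 - k, k, 0], k, Y, F + 1⟩ := by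
        intro k hk
        induction k with
        | zero => exact Relation.ReflTransGen.refl
        | succ j ih =>
          have hj : j ≤ F := Nat.le_of_succ_le hk
          refine Relation.ReflTransGen.tail (ih hj) ?_
          have hstep := Step.inc (f := f) (g := g) (op := op) (X := X)
            ⟨![F + 1 - j, j, 0], j, Y, F + 1⟩ (by simpa using Nat.sub_pos_of_lt (show j < F + 1 by omega))
          convert hstep using 2
          funext i
          fin_cases i <;> simp [move, Function.update] <;> omega
      have run1 := key F le_rfl
      have hskip := Step.skip (f := f) (g := g) (op := op) (X := X)
        ⟨![F + 1 - F, F, 0], F, Y, F + 1⟩ (by simp)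
      have hmv1 : move (![F + 1 - F, F, 0] : Fin 3 → ℕ) 0 1 = ![0, F + 1, 0] := by
        funext i
        fin_cases i <;> simp [move, Function.update] <;> omega
      rw [hmv1] at hskip
      have run2 := Relation.ReflTransGen.tail run1 hskip
      have hfin := Step.fin (f := f) (g := g) (op := op) (X := X)
        ⟨![0, F + 1, 0], F, Y, F + 1⟩ (by simp) (by simp [hF]) (by simpa using hA)
      refine ⟨_, Relation.ReflTransGen.tail run2 hfin, ?_⟩
      simp [move, Function.update]
  · rintro ⟨C, ⟨hval, hv, ℓ, hℓpos, hℓ⟩, h0, ht, C', hrun, h2⟩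
    have hℓ0 : ℓ = 0 := by
      by_contra hne
      exact absurd (hℓ 0 (fun h => hne h.symm)) (by omega)
    have hC2 : C.κ 2 = 0 := hℓ 2 (by rw [hℓ0]; decide)
    rcases covers_guard hrun h2 with h | h
    · omega
    · have hty : C.t = Y := funext ht
      rwa [hty] at h

end ThresholdAutomata
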